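/- arXiv:2012.01329 — 8 statements merged into one kernel-verified Lean document; each statement's English description precedes it below -/
import Mathlib

section
/- Let a, d ∈ ℕ with 0 < a ≤ d, and let n, m ≥ 1 satisfy n ≡ 2a (mod d) and m ≡ 2a (mod d). Then C(n, M_{a,d}) is a proper subset of C(m, M_{a,d}) if and only if n < m. -/
/-- `M_{a,d} = {x : x > 0, x ≡ a (mod d)}`. -/
def Mad (a d : ℕ) : Set ℕ := {x | 0 < x ∧ x % d = a % d}

/-- The circle of partition generated by `n` with base set `M`. -/
def CoP (n : ℕ) (M : Set ℕ) : Set ℕ :=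
  {x | 0 < x ∧ x < n ∧ x ∈ M ∧ n - x ∈ M}

lemma mad_ge (a d x : ℕ) (ha : 0 < a) (had : a ≤ d) (hx : x ∈ Mad a d) : a ≤ x := by
  obtain ⟨hx0, hxm⟩ := hx
  rcases lt_or_eq_of_le had with h | h
  · have h1 : a % d = a := Nat.mod_eq_of_lt h
    have h2 := Nat.mod_le x d
    omega
  · subst h
    have h1 : a % a = 0 := Nat.mod_self a
    exact Nat.le_of_dvd hx0 (Nat.dvd_of_mod_eq_zero (by omega))

lemma cop_mono (a d n m : ℕ) (hnm : n ≤ m)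
    (hnd : n % d = (2 * a) % d) (hmd : m % d = (2 * a) % d) :
    CoP n (Mad a d) ⊆ CoP m (Mad a d) := by
  intro x hx
  obtain ⟨hx0, hxn, hxM, h1, h2⟩ := hx
  refine ⟨hx0, lt_of_lt_of_le hxn hnm, hxM, ?_, ?_⟩
  · omega
  · have hd : d ∣ m - n := (Nat.modEq_iff_dvd' hnm).mp (hnd.trans hmd.symm)
    obtain ⟨k, hk⟩ := hd
    have hmx : m - x = (n - x) + d * k := by omega
    rw [hmx, Nat.add_mul_mod_self_left]
    exact h2

/-- For `0 < a ≤ d` and `n, m ≥ 1` with `n ≡ 2a (mod d)` and `m ≡ 2a (mod d)`,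
`C(n, M_{a,d}) ⊂ C(m, M_{a,d})` (properly) if and only if `n < m`. -/
theorem stmt_4 (a d n m : ℕ) (ha : 0 < a) (had : a ≤ d)
    (hn : 1 ≤ n) (hm : 1 ≤ m)
    (hnd : n % d = (2 * a) % d) (hmd : m % d = (2 * a) % d) :
    CoP n (Mad a d) ⊂ CoP m (Mad a d) ↔ n < m := by
  constructor
  · intro h
    by_contra hlt
    push_neg at hlt
    exact h.not_subset (cop_mono a d m n hlt hmd hnd)
  · intro hlt
    have hd : d ∣ m - n := (Nat.modEq_iff_dvd' hlt.le).mp (hnd.trans hmd.symm)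
    have hma : a < m := by
      obtain ⟨k, hk⟩ := hd
      have : k ≠ 0 := by rintro rfl; omega
      have : d ≤ d * k := Nat.le_mul_of_pos_right d (by omega)
      omega
    refine ⟨cop_mono a d n m hlt.le hnd hmd, fun hsub => ?_⟩
    -- witness : m - a ∈ CoP m but not in CoP n
    have hwM : (m - a) % d = a % d := by
      have h1 : a + (m - a) ≡ a + a [MOD d] := by
        unfold Nat.ModEq
        rw [Nat.add_sub_cancel' hma.le]
        rw [hmd]; congr 1; ring
      exact (Nat.ModEq.add_left_cancel' a h1)
    have hw : m - a ∈ CoP m (Mad a d) := by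
      refine ⟨by omega, by omega, ⟨by omega, hwM⟩, ?_, ?_⟩
      · omega
      · have : m - (m - a) = a := by omega
        rw [this]
    have hw' := hsub hw
    obtain ⟨_, hlt', _, hM⟩ := hw'
    have := mad_ge a d (n - (m - a)) ha had hM
    omega
end

section
/- Let a, d ∈ ℕ with 0 < a ≤ d, and let n, m ∈ ℕ satisfy 2a ≤ n, 2a ≤ m, n ≡ 2a (mod d) and m ≡ 2a (mod d). Then C(n, M_{a,d}) ∪ C(m, M_{a,d}) ⊆ C(n + m − 2a, M_{a,d}). -/
lemma aux_mem (a d n m : ℕ) (hm : 2 * a ≤ m)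
    (hmd : m % d = (2 * a) % d) (x : ℕ) (hx : x ∈ CoP n (Mad a d)) :
    x ∈ CoP (n + m - 2 * a) (Mad a d) := by
  obtain ⟨hx0, hxn, hxM, hnxM⟩ := hx
  obtain ⟨hpos, hmod⟩ := hnxM
  have hdvd : d ∣ m - 2 * a := (Nat.modEq_iff_dvd' hm).mp (hmd.symm)
  have hkey : n + m - 2 * a - x = (n - x) + (m - 2 * a) := by omega
  refine ⟨hx0, by omega, hxM, ?_, ?_⟩
  · omega
  · obtain ⟨k, hk⟩ := hdvd
    rw [hkey, Nat.add_mod, hk, Nat.mul_mod_right, Nat.add_zero, Nat.mod_mod, hmod]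

/-- For `0 < a ≤ d`, `2a ≤ n`, `2a ≤ m`, `n ≡ 2a (mod d)` and `m ≡ 2a (mod d)`,
`C(n, M_{a,d}) ∪ C(m, M_{a,d}) ⊆ C(n + m - 2a, M_{a,d})`. -/
theorem stmt_5 (a d n m : ℕ) (ha : 0 < a) (had : a ≤ d)
    (hn : 2 * a ≤ n) (hm : 2 * a ≤ m)
    (hnd : n % d = (2 * a) % d) (hmd : m % d = (2 * a) % d) :
    CoP n (Mad a d) ∪ CoP m (Mad a d) ⊆ CoP (n + m - 2 * a) (Mad a d) := by
  intro x hx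
  cases hx with
  | inl h => exact aux_mem a d n m hm hmd x h
  | inr h => have := aux_mem a d m n hn hnd x h
             rwa [show m + n = n + m by ring] at this
end

section
/- Let a, d ∈ ℕ with 0 < a ≤ d, let n ≥ 1 satisfy n ≡ 2a (mod d), and let r ∈ ℕ with 0 < r ≤ n. Set c := r mod d, and assume 0 < c < d and c ≢ 2a (mod d). Then for all x, k ∈ C(n, M_{a,d}), it is not the case that x + r ≡ k (mod n). In other words, the r-th level rotation of C(n, M_{a,d}) has empty target set. -/
/-- Nonexistence of the `r`-th level rotation of `C(n, M_{a,d})` when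
`r ≡ c (mod d)` with `0 < c < d` and `c ≢ 2a (mod d)`: no point of the CoP
is congruent modulo `n` to a rotated point. -/
theorem stmt_7 (a d n r : ℕ) (ha : 0 < a) (had : a ≤ d)
    (hn : 1 ≤ n) (hnd : n % d = (2 * a) % d)
    (hr : 0 < r) (hrn : r ≤ n)
    (hc : 0 < r % d) (hcd : r % d < d) (hc2a : r % d ≠ (2 * a) % d) :
    ∀ x ∈ CoP n (Mad a d), ∀ k ∈ CoP n (Mad a d),
      ¬ (x + r ≡ k [MOD n]) := by
  rintro x ⟨hx0, hxn, ⟨-, hxa⟩, -⟩ k ⟨hk0, hkn, ⟨-, hka⟩, -⟩ h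
  have hx : x ≡ a [MOD d] := hxa
  have hk : k ≡ a [MOD d] := hka
  have hn' : n ≡ 2 * a [MOD d] := hnd
  have h' : (x + r) % n = k := by
    have := h; unfold Nat.ModEq at this
    rwa [Nat.mod_eq_of_lt hkn] at this
  by_cases hlt : x + r < n
  · rw [Nat.mod_eq_of_lt hlt] at h'
    -- x + r = k : then r ≡ 0 mod d
    have h1 : a + r ≡ a + 0 [MOD d] := by
      calc a + r ≡ x + r [MOD d] := (hx.symm.add_right r)
        _ = k := h'
        _ ≡ a [MOD d] := hk
        _ = a + 0 := (Nat.add_zero a).symm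
    have h2 : r ≡ 0 [MOD d] := Nat.ModEq.add_left_cancel' a h1
    have : r % d = 0 := by simpa [Nat.ModEq] using h2
    omega
  · push_neg at hlt
    have heq : x + r = k + n := by
      have hlt2 : x + r - n < n := by omega
      have : (x + r) % n = x + r - n := by
        rw [Nat.mod_eq_sub_mod hlt, Nat.mod_eq_of_lt hlt2]
      omega
    have h1 : a + r ≡ a + 2 * a [MOD d] := by
      calc a + r ≡ x + r [MOD d] := (hx.symm.add_right r)
        _ = k + n := heq
        _ ≡ a + 2 * a [MOD d] := hk.add hn'
    exact hc2a (Nat.ModEq.add_left_cancel' a h1)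
end

section
/- Let a ∈ ℕ with a > 0, set d := 2a, and let n > 0 and r ∈ ℕ with d ∣ n and d ∣ r. Then for every x ∈ C(n, M_{a,d}), the rotated weight (x + r) mod n again belongs to C(n, M_{a,d}); that is, C(n, M_{a,d}) is invariant under the r-th level rotation. -/
/-- For `d = 2a` with `a > 0`, `d ∣ n`, `d ∣ r` and `n > 0`, the CoP
`C(n, M_{a,d})` is invariant under the `r`-th level rotation: the rotated
weight `(x + r) mod n` of any point again belongs to the CoP. -/
theorem stmt_8 (a n r : ℕ) (ha : 0 < a) (hn : 0 < n)
    (hdn : 2 * a ∣ n) (hdr : 2 * a ∣ r) :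
    ∀ x ∈ CoP n (Mad a (2 * a)), (x + r) % n ∈ CoP n (Mad a (2 * a)) := by
  intro x hx
  obtain ⟨hx0, hxn, ⟨_, hxm⟩, hnx⟩ := hx
  set d := 2 * a with hd
  have hdpos : 0 < d := by omega
  have haa : a % d = a := Nat.mod_eq_of_lt (by omega)
  set y := (x + r) % n with hy
  have hr0 : r % d = 0 := Nat.dvd_iff_mod_eq_zero.mp hdr
  have hn0 : n % d = 0 := Nat.dvd_iff_mod_eq_zero.mp hdn
  -- y % d = a
  have hyd : y % d = a := by
    have h1 : y % d = (x + r) % d := Nat.mod_mod_of_dvd _ hdn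
    have h2 : (x + r) % d = (x % d + r % d) % d := Nat.add_mod _ _ _
    rw [h1, h2, hr0, hxm, haa, Nat.add_zero, haa]
  have hylt : y < n := Nat.mod_lt _ hn
  have hy0 : 0 < y := by
    rcases Nat.eq_zero_or_pos y with h | h
    · rw [h] at hyd; simp at hyd; omega
    · exact h
  -- (n - y) % d = a
  have hny : (n - y) % d = a := by
    have hsum : ((n - y) + y) % d = 0 := by
      rw [Nat.sub_add_cancel (le_of_lt hylt)]; exact hn0
    have h3 : ((n - y) % d + y % d) % d = 0 := by rw [← Nat.add_mod]; exact hsum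
    rw [hyd] at h3
    have hm : (n - y) % d < d := Nat.mod_lt _ hdpos
    set m := (n - y) % d with hmdef
    have hdvd : d ∣ (m + a) := Nat.dvd_iff_mod_eq_zero.mpr h3
    obtain ⟨k, hk⟩ := hdvd
    rcases k with _ | _ | k
    · simp at hk; omega
    · simp at hk; omega
    · rw [hd] at hk
      have h4 : 2 * a * (k + 1 + 1) ≥ 4 * a := by nlinarith
      omega
  refine ⟨hy0, hylt, ⟨hy0, by rw [hyd, haa]⟩, ?_, ?_⟩
  · omega
  · rw [hny, haa]
end

section
/- There exists N ∈ ℕ such that every natural number n ≥ N can be written as n = z₁ + z₂ where z₁ and z₂ are both squarefree natural numbers. -/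
open Finset

private lemma tele_sum (K : ℕ) (hK : 2 ≤ K) :
    ∀ M, K ≤ M → ∑ k ∈ Finset.Ico K M, (1 : ℚ) / ((k : ℚ) * k) ≤
      1 / ((K : ℚ) - 1) - 1 / ((M : ℚ) - 1) := by
  intro M
  induction M with
  | zero => intro h; omega
  | succ M ih =>
    intro h
    rcases Nat.lt_or_ge M K with h' | h'
    · have : K = M + 1 := by omega
      subst this
      simp
    · rw [Finset.sum_Ico_succ_top h']
      have hM : (2 : ℚ) ≤ (M : ℚ) := by exact_mod_cast hK.trans h'
      have key : (1 : ℚ) / ((M : ℚ) * M) ≤ 1 / ((M : ℚ) - 1) - 1 / M := by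
        rw [div_sub_div _ _ (by linarith) (by linarith), div_le_div_iff₀ (by nlinarith) (by nlinarith)]
        ring_nf
        nlinarith
      have := ih h'
      push_cast
      have e : ((M:ℚ) + 1 - 1) = (M:ℚ) := by ring
      rw [e]
      linarith

private lemma tail_sum (M : ℕ) :
    ∑ k ∈ Finset.Ico 20 M, (1 : ℚ) / ((k : ℚ) * k) ≤ 1 / 19 := by
  rcases Nat.lt_or_ge M 20 with h | h
  · rw [Finset.Ico_eq_empty (by omega)]; norm_num
  · have := tele_sum 20 (by norm_num) M h
    have hM : (20 : ℚ) ≤ (M : ℚ) := by exact_mod_cast h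
    have : (0:ℚ) < (M:ℚ) - 1 := by linarith
    have h2 : (0:ℚ) ≤ 1 / ((M : ℚ) - 1) := by positivity
    norm_num at this
    linarith

/-- Every sufficiently large natural number is the sum of two squarefree
natural numbers. -/
theorem stmt_11 :
    ∃ N : ℕ, ∀ n ≥ N, ∃ z₁ z₂ : ℕ,
      Squarefree z₁ ∧ Squarefree z₂ ∧ n = z₁ + z₂ := by
  use 100
  intro n hn
  set m := n - 1 with hm
  have hmn : n = m + 1 := by omega
  have hm99 : 99 ≤ m := by omega
  set S : Finset ℕ := (Finset.Ioc 0 m).filter Squarefree with hS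
  set B : Finset ℕ := (Finset.Ioc 0 m).filter (fun k => ¬ Squarefree k) with hB
  have hcard : S.card + B.card = m := by
    rw [hS, hB, Finset.card_filter_add_card_filter_not, Nat.card_Ioc]
    omega
  -- bound on B.card
  set P : Finset ℕ := (Finset.range (m+1)).filter Nat.Prime with hP
  have hBsub : B ⊆ P.biUnion (fun p => (Finset.Ioc 0 m).filter (fun x => p * p ∣ x)) := by
    intro k hk
    rw [hB, Finset.mem_filter, Finset.mem_Ioc] at hk
    obtain ⟨⟨hk0, hkm⟩, hknsf⟩ := hk
    rw [Nat.squarefree_iff_prime_squarefree] at hknsf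
    push_neg at hknsf
    obtain ⟨p, hp, hpd⟩ := hknsf
    have hpk : p ≤ k := Nat.le_of_dvd hk0 (dvd_trans (Dvd.intro p rfl) hpd)
    rw [Finset.mem_biUnion]
    exact ⟨p, by simp [hP, Nat.lt_succ_iff, hp, hpk.trans hkm],
      by simp [Finset.mem_Ioc, hk0, hkm, hpd]⟩
  have hBcard : (B.card : ℚ) ≤ ∑ p ∈ P, (m : ℚ) / ((p:ℚ) * p) := by
    calc (B.card : ℚ) ≤ ((P.biUnion (fun p => (Finset.Ioc 0 m).filter (fun x => p * p ∣ x))).card : ℚ) := by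
          exact_mod_cast Finset.card_le_card hBsub
      _ ≤ ∑ p ∈ P, (((Finset.Ioc 0 m).filter (fun x => p * p ∣ x)).card : ℚ) := by
          exact_mod_cast Finset.card_biUnion_le
      _ = ∑ p ∈ P, ((m / (p * p) : ℕ) : ℚ) := by
          refine Finset.sum_congr rfl fun p _ => ?_
          rw [Nat.Ioc_filter_dvd_card_eq_div]
      _ ≤ ∑ p ∈ P, (m : ℚ) / ((p:ℚ) * p) := by
          refine Finset.sum_le_sum fun p _ => ?_
          rw [← Nat.cast_mul]
          exact Nat.cast_div_le
  -- split the sum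
  have hsplit : P = ((Finset.range 20).filter Nat.Prime) ∪
      ((Finset.Ico 20 (m+1)).filter Nat.Prime) := by
    rw [hP, ← Finset.filter_union, Finset.range_eq_Ico, Finset.range_eq_Ico,
      Finset.Ico_union_Ico_eq_Ico (by omega) (by omega)]
  have hdisj : Disjoint ((Finset.range 20).filter Nat.Prime)
      ((Finset.Ico 20 (m+1)).filter Nat.Prime) := by
    apply Finset.disjoint_filter_filter
    rw [Finset.range_eq_Ico]
    exact Finset.Ico_disjoint_Ico_consecutive 0 20 (m+1)
  have hhead : ∑ p ∈ (Finset.range 20).filter Nat.Prime, (m : ℚ) / ((p:ℚ) * p)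
      ≤ (m : ℚ) * (41578647715669 / 94083986096100) := by
    have : (Finset.range 20).filter Nat.Prime = {2,3,5,7,11,13,17,19} := by decide
    rw [this]
    norm_num [Finset.sum_insert, Finset.mem_insert]
    ring_nf
    norm_num
  have htail : ∑ p ∈ (Finset.Ico 20 (m+1)).filter Nat.Prime, (m : ℚ) / ((p:ℚ) * p)
      ≤ (m : ℚ) * (1 / 19) := by
    calc ∑ p ∈ (Finset.Ico 20 (m+1)).filter Nat.Prime, (m : ℚ) / ((p:ℚ) * p)
        ≤ ∑ k ∈ Finset.Ico 20 (m+1), (m : ℚ) / ((k:ℚ) * k) := by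
          refine Finset.sum_le_sum_of_subset_of_nonneg (Finset.filter_subset _ _)
            fun k hk _ => ?_
          have : 0 < k := by
            rw [Finset.mem_Ico] at hk; omega
          positivity
      _ = (m : ℚ) * ∑ k ∈ Finset.Ico 20 (m+1), (1:ℚ) / ((k:ℚ) * k) := by
          rw [Finset.mul_sum]
          exact Finset.sum_congr rfl fun k _ => by ring
      _ ≤ (m : ℚ) * (1 / 19) := by
          have h0 : (0:ℚ) ≤ (m:ℚ) := by positivity
          exact mul_le_mul_of_nonneg_left (tail_sum (m+1)) h0
  have hBlt : (B.card : ℚ) < (m : ℚ) / 2 := by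
    have hm0 : (1:ℚ) ≤ (m:ℚ) := by exact_mod_cast (by omega : 1 ≤ m)
    calc (B.card : ℚ) ≤ ∑ p ∈ P, (m : ℚ) / ((p:ℚ) * p) := hBcard
      _ = ∑ p ∈ (Finset.range 20).filter Nat.Prime, (m : ℚ) / ((p:ℚ) * p)
          + ∑ p ∈ (Finset.Ico 20 (m+1)).filter Nat.Prime, (m : ℚ) / ((p:ℚ) * p) := by
          rw [hsplit, Finset.sum_union hdisj]
      _ ≤ (m : ℚ) * (41578647715669 / 94083986096100) + (m : ℚ) * (1 / 19) := by linarith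
      _ < (m : ℚ) / 2 := by nlinarith
  have hSgt : m < 2 * S.card := by
    have h1 : (S.card : ℚ) + (B.card : ℚ) = (m : ℚ) := by exact_mod_cast hcard
    have : (m : ℚ) < 2 * (S.card : ℚ) := by linarith
    exact_mod_cast this
  -- pigeonhole
  set T : Finset ℕ := S.image (fun z => n - z) with hT
  have hSsub : S ⊆ Finset.Ioc 0 m := Finset.filter_subset _ _
  have hTcard : T.card = S.card := by
    rw [hT]
    apply Finset.card_image_of_injOn
    intro a ha b hb hab
    have ha' := Finset.mem_Ioc.mp (hSsub ha)
    have hb' := Finset.mem_Ioc.mp (hSsub hb)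
    simp only at hab
    omega
  have hTsub : T ⊆ Finset.Ioc 0 m := by
    intro x hx
    rw [hT, Finset.mem_image] at hx
    obtain ⟨z, hz, rfl⟩ := hx
    have := Finset.mem_Ioc.mp (hSsub hz)
    rw [Finset.mem_Ioc]
    omega
  have hinter : (S ∩ T).Nonempty := by
    by_contra h
    rw [Finset.not_nonempty_iff_eq_empty, ← Finset.disjoint_iff_inter_eq_empty] at h
    have h1 : (S ∪ T).card = S.card + T.card := Finset.card_union_of_disjoint h
    have h2 : (S ∪ T).card ≤ m := by
      have := Finset.card_le_card (Finset.union_subset hSsub hTsub)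
      rwa [Nat.card_Ioc] at this
    omega
  obtain ⟨z, hz⟩ := hinter
  rw [Finset.mem_inter] at hz
  obtain ⟨hzS, hzT⟩ := hz
  rw [hT, Finset.mem_image] at hzT
  obtain ⟨w, hwS, hwz⟩ := hzT
  have hzsf : Squarefree z := (Finset.mem_filter.mp hzS).2
  have hwsf : Squarefree w := (Finset.mem_filter.mp hwS).2
  have hw' := Finset.mem_Ioc.mp (hSsub hwS)
  exact ⟨w, z, hwsf, hzsf, by omega⟩
end

section
/- Let a, d ∈ ℕ with d ≥ 1. Then the set of natural numbers n with n ≡ a (mod d) that admit a representation n = z₁ + z₂ with z₁ and z₂ both squarefree is infinite. -/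
open Finset

-- telescoping tail bound
lemma tail_aux : ∀ n : ℕ, 17 ≤ n → ∑ m ∈ Finset.Ico 17 n, (1:ℚ)/(m^2) ≤ 1/16 - 1/(n-1) := by
  intro n hn
  induction n, hn using Nat.le_induction with
  | base => norm_num
  | succ n hn ih =>
      rw [Finset.sum_Ico_succ_top (by omega)]
      have hn' : (17:ℚ) ≤ n := by exact_mod_cast hn
      have h1 : (1:ℚ)/(n^2) ≤ 1/(n-1) - 1/n := by
        rw [div_sub_div _ _ (by nlinarith) (by nlinarith)]
        rw [div_le_div_iff₀ (by nlinarith) (by nlinarith)]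
        ring_nf
        nlinarith
      have : ((n+1:ℕ):ℚ) - 1 = (n:ℚ) := by push_cast; ring
      rw [this]
      linarith
lemma tail_bound (n : ℕ) : ∑ m ∈ Finset.Ico 17 n, (1:ℚ)/(m^2) ≤ 1/16 := by
  rcases le_or_gt 17 n with h | h
  · have := tail_aux n h
    have hn' : (17:ℚ) ≤ n := by exact_mod_cast h
    have : (0:ℚ) < (n:ℚ) - 1 := by linarith
    have := one_div_pos.mpr this
    linarith [tail_aux n h]
  · rw [Finset.Ico_eq_empty (by omega)]; simp

-- sum over primes bound
lemma prime_sum_bound (n : ℕ) :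
    ∑ p ∈ (Finset.range n).filter Nat.Prime, (1:ℚ)/(p^2) ≤ 1/4+1/9+1/25+1/49+1/121+1/169+1/16 := by
  classical
  set F := (Finset.range n).filter Nat.Prime with hF
  rw [← Finset.sum_filter_add_sum_filter_not F (fun p => p < 17)]
  have h1 : F.filter (fun p => p < 17) ⊆ ({2,3,5,7,11,13} : Finset ℕ) := by
    intro p hp
    simp only [hF, Finset.mem_filter, Finset.mem_range] at hp
    obtain ⟨⟨_, hp2⟩, hp3⟩ := hp
    interval_cases p <;> first | rfl | (exfalso; revert hp2; decide) | decide
  have h2 : F.filter (fun p => ¬ p < 17) ⊆ Finset.Ico 17 n := by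
    intro p hp
    simp only [hF, Finset.mem_filter, Finset.mem_range] at hp
    simp only [Finset.mem_Ico]; omega
  have b1 : ∑ p ∈ F.filter (fun p => p < 17), (1:ℚ)/(p^2) ≤ 1/4+1/9+1/25+1/49+1/121+1/169 := by
    calc ∑ p ∈ F.filter (fun p => p < 17), (1:ℚ)/(p^2)
        ≤ ∑ p ∈ ({2,3,5,7,11,13} : Finset ℕ), (1:ℚ)/(p^2) := by
          apply Finset.sum_le_sum_of_subset_of_nonneg h1
          intro i _ _; positivity
      _ = 1/4+1/9+1/25+1/49+1/121+1/169 := by norm_num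
  have b2 : ∑ p ∈ F.filter (fun p => ¬ p < 17), (1:ℚ)/(p^2) ≤ 1/16 := by
    calc ∑ p ∈ F.filter (fun p => ¬ p < 17), (1:ℚ)/(p^2)
        ≤ ∑ m ∈ Finset.Ico 17 n, (1:ℚ)/(m^2) := by
          apply Finset.sum_le_sum_of_subset_of_nonneg h2
          intro i _ _; positivity
      _ ≤ 1/16 := tail_bound n
  linarith

-- every n ≥ 1000 is a sum of two squarefree numbers
lemma sum_two_squarefree (n : ℕ) (hn : 1000 ≤ n) :
    ∃ s t : ℕ, Squarefree s ∧ Squarefree t ∧ n = s + t := by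
  classical
  set c : ℚ := 1/4+1/9+1/25+1/49+1/121+1/169+1/16 with hc
  set Bad := (Finset.Ioo 0 n).filter (fun m => ¬ Squarefree m) with hBad
  set A := (Finset.Ioo 0 n).filter (fun m => Squarefree m) with hA
  -- Bad covered by multiples of p^2
  have hcover : Bad ⊆ ((Finset.range n).filter Nat.Prime).biUnion
      (fun p => (Finset.Ioo 0 n).filter (fun m => p^2 ∣ m)) := by
    intro m hm
    simp only [hBad, Finset.mem_filter, Finset.mem_Ioo] at hm
    obtain ⟨⟨hm0, hmn⟩, hmsf⟩ := hm
    rw [Nat.squarefree_iff_prime_squarefree] at hmsf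
    push_neg at hmsf
    obtain ⟨p, hp, hpd⟩ := hmsf
    have hp' : Nat.Prime p := hp
    refine Finset.mem_biUnion.mpr ⟨p, ?_, ?_⟩
    · simp only [Finset.mem_filter, Finset.mem_range]
      have hple : p * p ≤ m := Nat.le_of_dvd hm0 hpd
      have := hp'.two_le
      exact ⟨by nlinarith, hp'⟩
    · simp only [Finset.mem_filter, Finset.mem_Ioo]
      exact ⟨⟨hm0, hmn⟩, by rwa [sq]⟩
  have hcard_mult : ∀ p : ℕ, ((Finset.Ioo 0 n).filter (fun m => p^2 ∣ m)).card = (n-1) / p^2 := by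
    intro p
    have : Finset.Ioo 0 n = Finset.Ioc 0 (n-1) := by
      ext x; simp [Finset.mem_Ioo, Finset.mem_Ioc]; omega
    rw [this]
    simpa using Nat.Ioc_filter_dvd_card_eq_div (n-1) (p^2)
  have hBadcard : (Bad.card : ℚ) ≤ n * c := by
    have h1 : Bad.card ≤ ∑ p ∈ (Finset.range n).filter Nat.Prime, ((n-1) / p^2) := by
      calc Bad.card ≤ _ := Finset.card_le_card hcover
        _ ≤ ∑ p ∈ (Finset.range n).filter Nat.Prime,
              ((Finset.Ioo 0 n).filter (fun m => p^2 ∣ m)).card := Finset.card_biUnion_le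
        _ = ∑ p ∈ (Finset.range n).filter Nat.Prime, ((n-1) / p^2) := by
              simp_rw [hcard_mult]
    have h2 : ((∑ p ∈ (Finset.range n).filter Nat.Prime, ((n-1) / p^2) : ℕ) : ℚ)
        ≤ ∑ p ∈ (Finset.range n).filter Nat.Prime, (n:ℚ)/(p^2) := by
      push_cast
      apply Finset.sum_le_sum
      intro p hp
      simp only [Finset.mem_filter, Finset.mem_range] at hp
      have hp2 : (0:ℚ) < (p:ℚ)^2 := by
        have := hp.2.two_le; positivity
      calc ((((n-1) / p^2 : ℕ)):ℚ) ≤ ((n-1:ℕ):ℚ) / ((p^2:ℕ):ℚ) := Nat.cast_div_le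
        _ ≤ (n:ℚ)/(p^2) := by
            have h3 : ((n-1:ℕ):ℚ) ≤ (n:ℚ) := by exact_mod_cast Nat.sub_le n 1
            push_cast at h3 ⊢
            gcongr
    have h3 : ∑ p ∈ (Finset.range n).filter Nat.Prime, (n:ℚ)/(p^2)
        = (n:ℚ) * ∑ p ∈ (Finset.range n).filter Nat.Prime, (1:ℚ)/(p^2) := by
      rw [Finset.mul_sum]; apply Finset.sum_congr rfl; intro p _; ring
    have h4 := prime_sum_bound n
    have h1' : ((Bad.card : ℕ):ℚ) ≤ ((∑ p ∈ (Finset.range n).filter Nat.Prime, ((n-1) / p^2) : ℕ):ℚ) := by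
      exact_mod_cast h1
    have hn0 : (0:ℚ) ≤ (n:ℚ) := by positivity
    calc (Bad.card : ℚ) ≤ _ := h1'
      _ ≤ ∑ p ∈ (Finset.range n).filter Nat.Prime, (n:ℚ)/(p^2) := h2
      _ = (n:ℚ) * ∑ p ∈ (Finset.range n).filter Nat.Prime, (1:ℚ)/(p^2) := h3
      _ ≤ n * c := by
          apply mul_le_mul_of_nonneg_left h4 hn0
  -- count squarefree numbers
  have hsplit : A.card + Bad.card = n - 1 := by
    have := Finset.card_filter_add_card_filter_not
      (s := Finset.Ioo 0 n) (p := fun m => Squarefree m)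
    simpa [hA, hBad, Nat.card_Ioo] using this
  have hAcard : (n:ℚ) - 1 - n * c ≤ (A.card : ℚ) := by
    have h5 : (A.card:ℚ) + Bad.card = ((n-1:ℕ):ℚ) := by exact_mod_cast hsplit
    rw [Nat.cast_sub (by omega)] at h5
    push_cast at h5
    linarith
  -- pigeonhole
  have hkey : n - 1 < 2 * A.card := by
    have hn' : (1000:ℚ) ≤ (n:ℚ) := by exact_mod_cast hn
    have : ((n-1:ℕ):ℚ) < 2 * (A.card:ℚ) := by
      rw [Nat.cast_sub (by omega)]
      push_cast
      have : (n:ℚ) - 1 < 2 * ((n:ℚ) - 1 - n * c) := by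
        rw [hc]; nlinarith
      linarith
    exact_mod_cast this
  set B := A.image (fun s => n - s) with hB
  have hBsub : B ⊆ Finset.Ioo 0 n := by
    intro x hx
    simp only [hB, Finset.mem_image] at hx
    obtain ⟨s, hs, rfl⟩ := hx
    simp only [hA, Finset.mem_filter, Finset.mem_Ioo] at hs
    simp only [Finset.mem_Ioo]
    omega
  have hBcard : B.card = A.card := by
    apply Finset.card_image_of_injOn
    intro x hx y hy hxy
    simp only [hA, Finset.mem_coe, Finset.mem_filter, Finset.mem_Ioo] at hx hy
    have hxy' : n - x = n - y := by simpa using hxy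
    omega
  have hnd : ¬ Disjoint A B := by
    intro hdisj
    have hAsub : A ⊆ Finset.Ioo 0 n := by rw [hA]; exact Finset.filter_subset _ _
    have := Finset.card_le_card (Finset.union_subset hAsub hBsub)
    rw [Finset.card_union_of_disjoint hdisj, hBcard, Nat.card_Ioo] at this
    omega
  rw [Finset.not_disjoint_iff] at hnd
  obtain ⟨x, hxA, hxB⟩ := hnd
  simp only [hB, Finset.mem_image] at hxB
  obtain ⟨s, hsA, hsx⟩ := hxB
  simp only [hA, Finset.mem_filter, Finset.mem_Ioo] at hxA hsA
  exact ⟨s, x, hsA.2, hxA.2, by omega⟩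

/-- For any `a, d ∈ ℕ` with `d ≥ 1`, there are infinitely many `n ≡ a (mod d)`
which are the sum of two squarefree natural numbers. -/
theorem stmt_12 (a d : ℕ) (hd : 1 ≤ d) :
    {n : ℕ | n % d = a % d ∧ ∃ z₁ z₂ : ℕ,
      Squarefree z₁ ∧ Squarefree z₂ ∧ n = z₁ + z₂}.Infinite := by
  apply Set.infinite_of_injective_forall_mem
    (f := fun k : ℕ => a % d + d * (k + 1000))
  · intro x y hxy
    simp only at hxy
    have := Nat.eq_of_mul_eq_mul_left (show 0 < d by omega)
      (by omega : d * (x + 1000) = d * (y + 1000))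
    omega
  · intro k
    constructor
    · simp [Nat.add_mul_mod_self_left]
    · apply sum_two_squarefree
      have : 1 * (k + 1000) ≤ d * (k + 1000) := Nat.mul_le_mul_right _ hd
      show 1000 ≤ a % d + d * (k + 1000)
      exact le_trans (by rw [one_mul]; exact Nat.le_add_left _ _) (le_trans this (Nat.le_add_left _ _))
end

section
/- Let M ⊆ ℕ and n ∈ ℕ, let C = C(n,M) (a finite set) with k = #C, and put a = ⌊k/2⌋. Let S = {x + u : x, u ∈ C, x ≠ u, x + u ≠ n, 2x ≠ n, 2u ≠ n} be the set of generators of children of the parent CoP C(n,M). Then #S ≤ 2a(a−1), and if k ≥ 4 then #S ≥ 4(a−1). -/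
theorem Finset.two_mul_card_filter_fst_lt {α : Type*} [LinearOrder α] {P : Finset (α × α)}
    (hswap : ∀ p ∈ P, p.swap ∈ P) (hdiag : ∀ p ∈ P, p.1 ≠ p.2) :
    2 * (P.filter fun p => p.1 < p.2).card = P.card := by
  rw [← P.card_filter_add_card_filter_not (fun p => p.1 < p.2), two_mul]
  congr 1
  refine Finset.card_bij' (fun p _ => p.swap) (fun p _ => p.swap) ?_ ?_ (by simp) (by simp)
  · intro p hp
    rw [Finset.mem_filter] at hp ⊢
    exact ⟨hswap p hp.1, not_lt.2 hp.2.le⟩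
  · intro p hp
    rw [Finset.mem_filter] at hp ⊢
    exact ⟨hswap p hp.1, lt_of_le_of_ne (not_lt.1 hp.2) (hdiag p hp.1).symm⟩

namespace CoP

variable {n : ℕ} {M : Set ℕ} {x u : ℕ}

theorem finite (n : ℕ) (M : Set ℕ) : (CoP n M).Finite :=
  (Set.finite_Iio n).subset fun _ hx => hx.2.1

theorem sub_mem (hx : x ∈ CoP n M) : n - x ∈ CoP n M := by
  obtain ⟨hx0, hxn, hxM, hnxM⟩ := hx
  refine ⟨by omega, by omega, hnxM, ?_⟩
  rwa [Nat.sub_sub_self hxn.le]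

noncomputable def axisPoints (n : ℕ) (M : Set ℕ) : Finset ℕ :=
  (finite n M).toFinset.filter (2 * · ≠ n)

theorem mem_axisPoints : x ∈ axisPoints n M ↔ x ∈ CoP n M ∧ 2 * x ≠ n := by
  simp [axisPoints]

theorem lt_of_mem_axisPoints (hx : x ∈ axisPoints n M) : x < n :=
  (mem_axisPoints.1 hx).1.2.1

theorem sub_mem_axisPoints (hx : x ∈ axisPoints n M) : n - x ∈ axisPoints n M := by
  obtain ⟨hxC, hxc⟩ := mem_axisPoints.1 hx
  exact mem_axisPoints.2 ⟨sub_mem hxC, by have := hxC.2.1; omega⟩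

theorem card_axisPoints : (axisPoints n M).card = 2 * ((CoP n M).ncard / 2) := by
  set N := axisPoints n M
  have hhalves : (N.filter (2 * · < n)).card = (N.filter fun x => ¬ 2 * x < n).card := by
    refine Finset.card_bij' (fun x _ => n - x) (fun x _ => n - x) ?_ ?_ ?_ ?_ <;>
      intro x hx <;> rw [Finset.mem_filter] at hx <;> have := lt_of_mem_axisPoints hx.1
    · exact Finset.mem_filter.2 ⟨sub_mem_axisPoints hx.1, by omega⟩
    · have := (mem_axisPoints.1 hx.1).2
      exact Finset.mem_filter.2 ⟨sub_mem_axisPoints hx.1, by omega⟩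
    all_goals omega
  have hcenter : ((finite n M).toFinset.filter fun x => ¬ 2 * x ≠ n).card ≤ 1 :=
    Finset.card_le_one.2 fun x hx y hy => by
      simp only [Finset.mem_filter] at hx hy
      omega
  have hsplitC := (finite n M).toFinset.card_filter_add_card_filter_not (2 * · ≠ n)
  have hsplitN := N.card_filter_add_card_filter_not (2 * · < n)
  rw [Set.ncard_eq_toFinset_card _ (finite n M)]
  change N.card + _ = _ at hsplitC
  omega

noncomputable def chords (n : ℕ) (M : Set ℕ) : Finset (ℕ × ℕ) :=
  (axisPoints n M).offDiag.filter fun p => p.1 + p.2 ≠ n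

theorem card_chords_add : (chords n M).card + 2 * (axisPoints n M).card =
    (axisPoints n M).card * (axisPoints n M).card := by
  set N := axisPoints n M
  have hdiameters : (N.offDiag.filter fun p => ¬ p.1 + p.2 ≠ n).card = N.card := by
    refine Finset.card_bij' (fun p _ => p.1) (fun x _ => (x, n - x)) ?_ ?_ ?_ (by simp)
    · intro p hp
      exact (Finset.mem_offDiag.1 (Finset.mem_filter.1 hp).1).1
    · intro x hx
      have := lt_of_mem_axisPoints hx
      have := (mem_axisPoints.1 hx).2
      simp only [Finset.mem_filter, Finset.mem_offDiag]
      exact ⟨⟨hx, sub_mem_axisPoints hx, by omega⟩, by omega⟩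
    · intro p hp
      simp only [Finset.mem_filter, not_not] at hp
      exact Prod.ext rfl (by omega)
  have hoff := N.offDiag_card
  have hsplit : (chords n M).card + (N.offDiag.filter fun p => ¬ p.1 + p.2 ≠ n).card =
      N.offDiag.card :=
    N.offDiag.card_filter_add_card_filter_not _
  have hle : N.card ≤ N.card * N.card := Nat.le_mul_self _
  omega

theorem card_filter_chords_lt :
    ((chords n M).filter fun p => p.1 < p.2).card =
      2 * ((CoP n M).ncard / 2) * ((CoP n M).ncard / 2 - 1) := by
  have hhalf : 2 * ((chords n M).filter fun p => p.1 < p.2).card = (chords n M).card := by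
    refine Finset.two_mul_card_filter_fst_lt (fun p hp => ?_) (fun p hp => ?_) <;>
      simp only [chords, Finset.mem_filter, Finset.mem_offDiag] at hp ⊢
    · exact ⟨⟨hp.1.2.1, hp.1.1, hp.1.2.2.symm⟩, by rw [add_comm]; exact hp.2⟩
    · exact hp.1.2.2
  have hcount := card_chords_add (n := n) (M := M)
  rw [card_axisPoints] at hcount
  generalize (CoP n M).ncard / 2 = a at hcount ⊢
  rcases a with _ | a
  · omega
  · rw [Nat.add_sub_cancel]
    nlinarith

def childGenerators (n : ℕ) (M : Set ℕ) : Set ℕ :=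
  {s | ∃ x ∈ CoP n M, ∃ u ∈ CoP n M, x ≠ u ∧ x + u ≠ n ∧ 2 * x ≠ n ∧ 2 * u ≠ n ∧ s = x + u}

theorem add_mem_childGenerators (hx : x ∈ axisPoints n M) (hu : u ∈ axisPoints n M)
    (hxu : x ≠ u) (hsum : x + u ≠ n) : x + u ∈ childGenerators n M := by
  obtain ⟨hxC, hxc⟩ := mem_axisPoints.1 hx
  obtain ⟨huC, huc⟩ := mem_axisPoints.1 hu
  exact ⟨x, hxC, u, huC, hxu, hsum, hxc, huc, rfl⟩

theorem childGenerators_subset_image :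
    childGenerators n M ⊆
      ((chords n M).filter fun p => p.1 < p.2).image fun p => p.1 + p.2 := by
  rintro _ ⟨x, hx, u, hu, hxu, hsum, hxc, huc, rfl⟩
  have hx' := mem_axisPoints.2 ⟨hx, hxc⟩
  have hu' := mem_axisPoints.2 ⟨hu, huc⟩
  simp only [Finset.coe_image, Set.mem_image, Finset.mem_coe, Finset.mem_filter, chords,
    Finset.mem_offDiag, Prod.exists]
  rcases hxu.lt_or_gt with h | h
  · exact ⟨x, u, ⟨⟨⟨hx', hu', hxu⟩, hsum⟩, h⟩, rfl⟩
  · exact ⟨u, x, ⟨⟨⟨hu', hx', hxu.symm⟩, by omega⟩, h⟩, add_comm u x⟩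

theorem childGenerators_finite : (childGenerators n M).Finite :=
  (Finset.finite_toSet _).subset childGenerators_subset_image

theorem ncard_childGenerators_le :
    (childGenerators n M).ncard ≤ 2 * ((CoP n M).ncard / 2) * ((CoP n M).ncard / 2 - 1) := by
  rw [← card_filter_chords_lt]
  exact (Set.ncard_le_ncard childGenerators_subset_image (Finset.finite_toSet _)).trans_eq
    (Set.ncard_coe_finset _) |>.trans Finset.card_image_le

/-- The smallest axis point `p` and its reflection `q = n - p`, the largest one, each add to
every other axis point `x` to give a child generator, and `p + x < p + q < q + x`. -/
theorem two_mul_card_axisPoints_sub_two_le :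
    2 * ((axisPoints n M).card - 2) ≤ (childGenerators n M).ncard := by
  set N := axisPoints n M
  rcases N.eq_empty_or_nonempty with hN | hN
  · simp [hN]
  set p := N.min' hN
  set q := n - p
  have hpN : p ∈ N := N.min'_mem hN
  have hqN : q ∈ N := sub_mem_axisPoints hpN
  have hbounds : ∀ x ∈ N, p ≤ x ∧ x ≤ q := fun x hx => by
    have := N.min'_le _ (sub_mem_axisPoints hx)
    have := lt_of_mem_axisPoints hx
    exact ⟨N.min'_le x hx, by omega⟩
  have hpq : p < q := by
    have := (mem_axisPoints.1 hpN).2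
    have := (hbounds p hpN).2
    omega
  set D := (N.erase p).erase q
  have hD : ∀ x ∈ D, x ∈ N ∧ p < x ∧ x < q := fun x hx => by
    obtain ⟨hxq, hxp, hx⟩ := by simpa only [D, Finset.mem_erase] using hx
    have := hbounds x hx
    exact ⟨hx, by omega, by omega⟩
  have hsub : ↑(D.image (p + ·) ∪ D.image (q + ·)) ⊆ childGenerators n M := by
    simp only [Finset.coe_union, Finset.coe_image, Set.union_subset_iff, Set.image_subset_iff]
    refine ⟨fun x hx => ?_, fun x hx => ?_⟩ <;> obtain ⟨hxN, hpx, hxq⟩ := hD x hx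
    · exact add_mem_childGenerators hpN hxN hpx.ne (by omega)
    · exact add_mem_childGenerators hqN hxN hxq.ne' (by omega)
  have hdisj : Disjoint (D.image (p + ·)) (D.image (q + ·)) := by
    simp only [Finset.disjoint_left, Finset.mem_image]
    rintro _ ⟨x, hx, rfl⟩ ⟨y, hy, hxy⟩
    have := hD x hx
    have := hD y hy
    omega
  have hcardD : D.card = N.card - 2 := by
    rw [Finset.card_erase_of_mem (Finset.mem_erase.2 ⟨hpq.ne', hqN⟩),
      Finset.card_erase_of_mem hpN, Nat.sub_sub]
  calc 2 * (N.card - 2) = (D.image (p + ·) ∪ D.image (q + ·)).card := by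
        rw [Finset.card_union_of_disjoint hdisj,
          Finset.card_image_of_injective _ (add_right_injective p),
          Finset.card_image_of_injective _ (add_right_injective q), hcardD, two_mul]
    _ ≤ (childGenerators n M).ncard := by
        rw [← Set.ncard_coe_finset]
        exact Set.ncard_le_ncard hsub childGenerators_finite

end CoP

/-- Bounds on the number of children of a parent CoP `C(n,M)` with `k` points:
the set `S` of generators of children (sums `x + u` of weights of two points on
distinct real axes, neither being the center) satisfies `#S ≤ 2a(a-1)` where
`a = ⌊k/2⌋`, and `#S ≥ 4(a-1)` provided `k ≥ 4`. -/
theorem stmt_15 (M : Set ℕ) (n : ℕ) :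
    {s : ℕ | ∃ x ∈ CoP n M, ∃ u ∈ CoP n M,
        x ≠ u ∧ x + u ≠ n ∧ 2 * x ≠ n ∧ 2 * u ≠ n ∧ s = x + u}.ncard ≤
      2 * ((CoP n M).ncard / 2) * ((CoP n M).ncard / 2 - 1) ∧
    (4 ≤ (CoP n M).ncard →
      4 * ((CoP n M).ncard / 2 - 1) ≤
        {s : ℕ | ∃ x ∈ CoP n M, ∃ u ∈ CoP n M,
          x ≠ u ∧ x + u ≠ n ∧ 2 * x ≠ n ∧ 2 * u ≠ n ∧ s = x + u}.ncard) := by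
  refine ⟨CoP.ncard_childGenerators_le, fun _ => ?_⟩
  have hlower := CoP.two_mul_card_axisPoints_sub_two_le (n := n) (M := M)
  rw [CoP.card_axisPoints] at hlower
  exact le_of_eq_of_le (by omega) hlower
end

section
/- Let a, d ∈ ℕ with 2 < a ≤ d, and let n ∈ ℕ satisfy n ≡ 2a (mod d). Then the extended circle of partition coincides with the ordinary one: C*(n, M_{a,d}) = C(n, M_{a,d}). -/
/-- The extended circle of partition generated by `n` with base set `M`. -/
def xCoP (n : ℕ) (M : Set ℕ) : Set ℕ :=
  {x | 2 < x ∧ x < n ∧ (x ∈ M ∨ n - x ∈ M)}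

/-- For `2 < a ≤ d` and `n ≡ 2a (mod d)`, the extended circle of partition
coincides with the ordinary one: `C*(n, M_{a,d}) = C(n, M_{a,d})`. -/
theorem stmt_17 (a d n : ℕ) (ha : 2 < a) (had : a ≤ d)
    (hnd : n % d = (2 * a) % d) :
    xCoP n (Mad a d) = CoP n (Mad a d) := by
  -- complement stays in M
  have key : ∀ x : ℕ, x < n → x % d = a % d → (n - x) % d = a % d := by
    intro x hx hxm
    have h2 : Nat.ModEq d x a := hxm
    have h3 : Nat.ModEq d ((n - x) + x) (a + a) := by
      rw [Nat.sub_add_cancel hx.le]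
      calc n ≡ 2 * a [MOD d] := hnd
        _ = a + a := two_mul a
    exact Nat.ModEq.add_right_cancel h2 h3
  -- members of M are > 2
  have big : ∀ x : ℕ, x ∈ Mad a d → 2 < x := by
    rintro x ⟨hx0, hxm⟩
    rcases lt_or_eq_of_le had with h | h
    · have : a % d = a := Nat.mod_eq_of_lt h
      have hle : a ≤ x := by
        calc a = x % d := by rw [hxm, this]
          _ ≤ x := Nat.mod_le x d
      omega
    · subst h
      have : x % a = 0 := by simpa using hxm
      have : a ∣ x := Nat.dvd_of_mod_eq_zero this
      have := Nat.le_of_dvd hx0 this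
      omega
  ext x
  constructor
  · rintro ⟨hx2, hxn, h | h⟩
    · exact ⟨by omega, hxn, ⟨by omega, h.2⟩, ⟨by omega, key x hxn h.2⟩⟩
    · refine ⟨by omega, hxn, ⟨by omega, ?_⟩, h⟩
      have h2 : n - (n - x) = x := by omega
      have := key (n - x) (by omega) h.2
      rwa [h2] at this
  · rintro ⟨hx0, hxn, hxM, hnxM⟩
    exact ⟨big x hxM, hxn, Or.inl hxM⟩
end
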